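/- Fix a real α > 1 and define u(λ) = α·log|tanh λ| − Re(1/sinh(2λ)) for λ ∈ ℂ with tanh λ ≠ 0 and sinh(2λ) ≠ 0 (u equals Re g where g(λ) = i·(α·p(λ) + cos(p(λ)))). Then there exist R > 0 and δ ∈ (0, π/4) such that: (a) u(λ) < 0 for every λ on the boundary of the rectangle { x + iy : |x| ≤ R, |y| ≤ π/4 − δ }, and (b) u(λ) > 0 for every λ on the boundary of the rectangle { x + iy : |x| ≤ R, π/4 + δ ≤ y ≤ 3π/4 − δ }. -/

import Mathlib

open Complex Real

/-! Write `λ = x + iy`, `s = cosh 2x`, `c = cos 2y`, `t = sinh 2x`. Then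
`|tanh λ|² = (s - c)/(s + c)` and `Re(1/sinh 2λ) = t c/(s² - c²)`, and for `c > 0` the bound
`log q ≤ q - 1` shows `u(λ) < 0` as soon as `|t| < α (s - c)`. On the vertical sides `|x| = R`
this holds once `R` is large, because `c ≤ 1` and `α > 1`; on the horizontal sides `c = sin 2δ`
is small and it holds for every `x`. The particle rectangle is the hole rectangle shifted by
`iπ/2`, and `u(λ + iπ/2) = -u(λ)` since `tanh(λ + iπ/2) = coth λ` and `sinh(2λ + iπ) = -sinh 2λ`. -/

/-- The real part of the phase function `g(λ) = i(α p(λ) + cos(p(λ)))`: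
`u(λ) = α log|tanh λ| - Re(1/sinh(2λ))`. -/
noncomputable def rePhase (α : ℝ) (l : ℂ) : ℝ :=
  α * Real.log (‖Complex.tanh l‖) - ((1 : ℂ) / Complex.sinh (2 * l)).re

namespace Complex

theorem sinh_eq_re_add_im (z : ℂ) :
    sinh z = (Real.sinh z.re * Real.cos z.im : ℝ) + (Real.cosh z.re * Real.sin z.im : ℝ) * I := by
  conv_lhs => rw [← re_add_im z]
  rw [sinh_add, sinh_mul_I, cosh_mul_I]; push_cast; ring

theorem cosh_eq_re_add_im (z : ℂ) :
    cosh z = (Real.cosh z.re * Real.cos z.im : ℝ) + (Real.sinh z.re * Real.sin z.im : ℝ) * I := by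
  conv_lhs => rw [← re_add_im z]
  rw [cosh_add, sinh_mul_I, cosh_mul_I]; push_cast; ring

theorem normSq_sinh (z : ℂ) :
    normSq (sinh z) = (Real.cosh (2 * z.re) - Real.cos (2 * z.im)) / 2 := by
  rw [sinh_eq_re_add_im, normSq_add_mul_I, Real.cosh_two_mul, Real.cos_two_mul]
  nlinarith [Real.cosh_sq z.re, Real.sin_sq_add_cos_sq z.im]

theorem normSq_cosh (z : ℂ) :
    normSq (cosh z) = (Real.cosh (2 * z.re) + Real.cos (2 * z.im)) / 2 := by
  rw [cosh_eq_re_add_im, normSq_add_mul_I, Real.cosh_two_mul, Real.cos_two_mul]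
  nlinarith [Real.cosh_sq z.re, Real.sin_sq_add_cos_sq z.im]

theorem log_norm_tanh (z : ℂ) :
    Real.log ‖tanh z‖ = Real.log ((Real.cosh (2 * z.re) - Real.cos (2 * z.im)) /
      (Real.cosh (2 * z.re) + Real.cos (2 * z.im))) / 2 := by
  rw [norm_def, Real.log_sqrt (normSq_nonneg _), tanh_eq_sinh_div_cosh, normSq_div,
    normSq_sinh, normSq_cosh, div_div_div_cancel_right₀ two_ne_zero]

theorem re_one_div_sinh_two_mul (z : ℂ) :
    (1 / sinh (2 * z)).re = Real.sinh (2 * z.re) * Real.cos (2 * z.im) /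
      (Real.cosh (2 * z.re) ^ 2 - Real.cos (2 * z.im) ^ 2) := by
  have h2re : (2 * z).re = 2 * z.re := by simp
  have h2im : (2 * z).im = 2 * z.im := by simp
  rw [one_div, inv_re, normSq_sinh, sinh_eq_re_add_im, h2re, h2im]
  simp only [add_re, ofReal_re, mul_re, I_re, I_im, ofReal_im]
  rw [Real.cosh_two_mul (2 * z.re), Real.cos_two_mul (2 * z.im), Real.sinh_sq]
  ring

end Complex

theorem rePhase_eq (α : ℝ) (l : ℂ) :
    rePhase α l = α / 2 * Real.log ((Real.cosh (2 * l.re) - Real.cos (2 * l.im)) /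
      (Real.cosh (2 * l.re) + Real.cos (2 * l.im))) - Real.sinh (2 * l.re) * Real.cos (2 * l.im) /
      (Real.cosh (2 * l.re) ^ 2 - Real.cos (2 * l.im) ^ 2) := by
  rw [rePhase, Complex.log_norm_tanh, Complex.re_one_div_sinh_two_mul]
  ring

theorem rePhase_add_pi_div_two_mul_I (α : ℝ) (l : ℂ) :
    rePhase α (l + π / 2 * I) = -rePhase α l := by
  have hsinh : Complex.sinh (l + π / 2 * I) = Complex.cosh l * I := by
    rw [Complex.sinh_add, Complex.sinh_mul_I, Complex.cosh_mul_I, Complex.cos_pi_div_two,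
      Complex.sin_pi_div_two]
    ring
  have hcosh : Complex.cosh (l + π / 2 * I) = Complex.sinh l * I := by
    rw [Complex.cosh_add, Complex.sinh_mul_I, Complex.cosh_mul_I, Complex.cos_pi_div_two,
      Complex.sin_pi_div_two]
    ring
  have hsinh2 : Complex.sinh (2 * (l + π / 2 * I)) = -Complex.sinh (2 * l) := by
    rw [mul_add, show (2 : ℂ) * (π / 2 * I) = π * I by ring, Complex.sinh_add, Complex.sinh_mul_I,
      Complex.cosh_mul_I, Complex.cos_pi, Complex.sin_pi]
    ring
  rw [rePhase, rePhase, Complex.tanh_eq_sinh_div_cosh, Complex.tanh_eq_sinh_div_cosh, hsinh, hcosh,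
    hsinh2, mul_div_mul_right _ _ I_ne_zero, ← inv_div, norm_inv, Real.log_inv, div_neg, neg_re]
  ring

theorem half_mul_log_div_sub_div_neg {α s t c : ℝ} (hα : 0 < α) (hc : 0 < c)
    (h : |t| < α * (s - c)) :
    α / 2 * Real.log ((s - c) / (s + c)) - t * c / (s ^ 2 - c ^ 2) < 0 := by
  have hsc : 0 < s - c := pos_of_mul_pos_right ((abs_nonneg t).trans_lt h) hα.le
  have hspc : 0 < s + c := by linarith
  have hlog : Real.log ((s - c) / (s + c)) ≤ -2 * c / (s + c) := by
    have := Real.log_le_sub_one_of_pos (div_pos hsc hspc)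
    rwa [div_sub_one hspc.ne', show s - c - (s + c) = -2 * c by ring] at this
  have hquot : -(α * c / (s + c)) < t * c / (s ^ 2 - c ^ 2) := by
    rw [show s ^ 2 - c ^ 2 = (s - c) * (s + c) by ring, lt_div_iff₀ (mul_pos hsc hspc)]
    have := mul_lt_mul_of_pos_right (neg_lt_of_abs_lt h) hc
    field_simp
    nlinarith
  calc α / 2 * Real.log ((s - c) / (s + c)) - t * c / (s ^ 2 - c ^ 2)
      < α / 2 * (-2 * c / (s + c)) + α * c / (s + c) := by
        linarith [mul_le_mul_of_nonneg_left hlog (by linarith : 0 ≤ α / 2)]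
    _ = 0 := by ring

theorem sinh_lt_mul_cosh_sub_one {α y : ℝ} (hα : 1 < α) (hy : 2 ≤ (α - 1) * y) :
    Real.sinh y < α * (Real.cosh y - 1) := by
  have hy₀ : 0 < y := by nlinarith
  have hE : α + 1 < (α - 1) * Real.exp y := by
    nlinarith [Real.add_one_lt_exp hy₀.ne']
  have hE₁ : 1 < Real.exp y := Real.one_lt_exp_iff.mpr hy₀
  have hinv : Real.exp y * Real.exp (-y) = 1 := by
    rw [← Real.exp_add, add_neg_cancel, Real.exp_zero]
  rw [Real.sinh_eq, Real.cosh_eq]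
  nlinarith [Real.exp_pos (-y)]

theorem abs_sinh_lt_mul_cosh_sub {α c : ℝ} (hα : 0 < α) (hc : 0 ≤ c)
    (hcα : c < (α ^ 2 - 1) / (α ^ 2 + 1)) (y : ℝ) :
    |Real.sinh y| < α * (Real.cosh y - c) := by
  have hs := Real.one_le_cosh y
  have hcα' : c * (α ^ 2 + 1) < α ^ 2 - 1 := (lt_div_iff₀ (by positivity)).mp hcα
  have hc1 : c < 1 := by nlinarith
  apply abs_lt_of_sq_lt_sq _ (by nlinarith)
  calc Real.sinh y ^ 2 = Real.cosh y ^ 2 - 1 := by rw [Real.cosh_sq]; ring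
    _ < (Real.cosh y - c) * (Real.cosh y + c) := by nlinarith
    _ ≤ (Real.cosh y - c) * (α ^ 2 * (Real.cosh y - c)) := by
        apply mul_le_mul_of_nonneg_left _ (by linarith)
        nlinarith
    _ = (α * (Real.cosh y - c)) ^ 2 := by ring

theorem rePhase_neg_of_abs_sinh_lt {α : ℝ} {l : ℂ} (hα : 0 < α) (hc : 0 < Real.cos (2 * l.im))
    (h : |Real.sinh (2 * l.re)| < α * (Real.cosh (2 * l.re) - Real.cos (2 * l.im))) :
    rePhase α l < 0 := by
  rw [rePhase_eq]
  exact half_mul_log_div_sub_div_neg hα hc h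

theorem rePhase_neg_of_abs_re_eq {α R : ℝ} {l : ℂ} (hα : 0 < α)
    (hR : Real.sinh (2 * R) < α * (Real.cosh (2 * R) - 1)) (hc : 0 < Real.cos (2 * l.im))
    (hx : |l.re| = R) : rePhase α l < 0 := by
  apply rePhase_neg_of_abs_sinh_lt hα hc
  rw [Real.abs_sinh, ← Real.cosh_abs (2 * l.re), abs_mul, abs_two, hx]
  nlinarith [Real.cos_le_one (2 * l.im)]

theorem rePhase_neg_of_cos_lt {α : ℝ} {l : ℂ} (hα : 0 < α) (hc : 0 < Real.cos (2 * l.im))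
    (hcα : Real.cos (2 * l.im) < (α ^ 2 - 1) / (α ^ 2 + 1)) : rePhase α l < 0 :=
  rePhase_neg_of_abs_sinh_lt hα hc (abs_sinh_lt_mul_cosh_sub hα hc.le hcα _)


theorem rePhase_neg_of_mem_hole_boundary {α R δ : ℝ} {l : ℂ} (hα : 0 < α)
    (hR : Real.sinh (2 * R) < α * (Real.cosh (2 * R) - 1)) (hδ : 0 < δ)
    (hδα : Real.sin (2 * δ) < (α ^ 2 - 1) / (α ^ 2 + 1)) (hy : |l.im| ≤ π / 4 - δ)
    (hedge : |l.re| = R ∨ |l.im| = π / 4 - δ) : rePhase α l < 0 := by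
  have hc : 0 < Real.cos (2 * l.im) := by
    apply Real.cos_pos_of_mem_Ioo; constructor <;> linarith [abs_le.mp hy]
  rcases hedge with hx | hy
  · exact rePhase_neg_of_abs_re_eq hα hR hc hx
  · apply rePhase_neg_of_cos_lt hα hc
    rwa [← Real.cos_abs, abs_mul, abs_two, hy, show 2 * (π / 4 - δ) = π / 2 - 2 * δ by ring,
      Real.cos_pi_div_two_sub]

theorem rePhase_pos_of_mem_particle_boundary {α R δ : ℝ} {l : ℂ} (hα : 0 < α)
    (hR : Real.sinh (2 * R) < α * (Real.cosh (2 * R) - 1)) (hδ : 0 < δ)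
    (hδα : Real.sin (2 * δ) < (α ^ 2 - 1) / (α ^ 2 + 1)) (hy₁ : π / 4 + δ ≤ l.im)
    (hy₂ : l.im ≤ 3 * π / 4 - δ) (hedge : |l.re| = R ∨ l.im = π / 4 + δ ∨ l.im = 3 * π / 4 - δ) :
    0 < rePhase α l := by
  rw [← sub_add_cancel l (π / 2 * I), rePhase_add_pi_div_two_mul_I, neg_pos]
  have him : (l - π / 2 * I).im = l.im - π / 2 := by simp
  have hre : (l - π / 2 * I).re = l.re := by simp
  apply rePhase_neg_of_mem_hole_boundary hα hR hδ hδα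
  · rw [him, abs_le]; constructor <;> linarith
  · rw [him, hre]
    rcases hedge with hx | hy | hy
    · exact Or.inl hx
    · right; rw [hy, abs_of_nonpos (by linarith)]; ring
    · right; rw [hy, abs_of_nonneg (by linarith)]; ring

/-- For `α > 1` there exist `R > 0` and `δ ∈ (0, π/4)` such that `u = Re g` is
strictly negative on the boundary of the rectangle `{x + iy : |x| ≤ R, |y| ≤ π/4 - δ}`
(the deformed hole contour) and strictly positive on the boundary of the rectangle
`{x + iy : |x| ≤ R, π/4 + δ ≤ y ≤ 3π/4 - δ}` (the deformed particle contour). -/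
theorem rePhase_signs_on_deformed_contours (α : ℝ) (hα : 1 < α) :
    ∃ R > (0 : ℝ), ∃ δ : ℝ, 0 < δ ∧ δ < π / 4 ∧
      (∀ l : ℂ, |l.re| ≤ R → |l.im| ≤ π / 4 - δ →
        (|l.re| = R ∨ |l.im| = π / 4 - δ) → rePhase α l < 0) ∧
      (∀ l : ℂ, |l.re| ≤ R → π / 4 + δ ≤ l.im → l.im ≤ 3 * π / 4 - δ →
        (|l.re| = R ∨ l.im = π / 4 + δ ∨ l.im = 3 * π / 4 - δ) → 0 < rePhase α l) := by
  have hα₀ : 0 < α := by linarith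
  set ε := (α ^ 2 - 1) / (α ^ 2 + 1)
  have hε : 0 < ε := div_pos (by nlinarith) (by positivity)
  set R := 1 / (α - 1)
  set δ := min (π / 8) (ε / 2)
  have hR : 0 < R := one_div_pos.mpr (by linarith)
  have hδ : 0 < δ := lt_min (by positivity) (by positivity)
  have hside : Real.sinh (2 * R) < α * (Real.cosh (2 * R) - 1) := by
    apply sinh_lt_mul_cosh_sub_one hα
    rw [mul_left_comm, mul_one_div_cancel (by linarith), mul_one]
  have htop : Real.sin (2 * δ) < ε :=
    (Real.sin_lt (by positivity)).trans_le (by linarith [min_le_right (π / 8) (ε / 2)])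
  exact ⟨R, hR, δ, hδ, (min_le_left _ _).trans_lt (by linarith [Real.pi_pos]),
    fun l _ hy hedge ↦ rePhase_neg_of_mem_hole_boundary hα₀ hside hδ htop hy hedge,
    fun l _ hy₁ hy₂ hedge ↦ rePhase_pos_of_mem_particle_boundary hα₀ hside hδ htop hy₁ hy₂ hedge⟩
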